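/- Let Y, Z ⊆ (X,d) be tangent equivalent at a ∈ Y ∩ Z w.r.t. r̃, and suppose there is a unique maximal self-stable family Z̃_{a,r̃} in Z̃ containing ã. Then Ỹ_{a,r̃} := [Z̃_{a,r̃}]_Y is the unique maximal self-stable family in Ỹ containing ã. -/

import Mathlib

open Filter Topology

/-- A normalizing sequence: positive reals tending to 0. -/
def Normalizing (r : ℕ → ℝ) : Prop :=
  (∀ n, 0 < r n) ∧ Tendsto r atTop (nhds 0)

/-- Two sequences in `X` are mutually stable w.r.t. `r`:
the limit of `dist (x n) (y n) / r n` exists and is finite. -/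
def MutuallyStable {X : Type*} [MetricSpace X] (r : ℕ → ℝ) (x y : ℕ → X) : Prop :=
  ∃ L : ℝ, Tendsto (fun n => dist (x n) (y n) / r n) atTop (nhds L)

/-- The normalized limit distance `d̃`. -/
noncomputable def dtilde {X : Type*} [MetricSpace X] (r : ℕ → ℝ) (x y : ℕ → X) : ℝ :=
  limUnder atTop (fun n => dist (x n) (y n) / r n)

/-- A family is self-stable if every two members are mutually stable. -/
def SelfStable {X : Type*} [MetricSpace X] (r : ℕ → ℝ) (F : Set (ℕ → X)) : Prop :=
  ∀ x ∈ F, ∀ y ∈ F, MutuallyStable r x y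

/-- A family is maximal self-stable if it is self-stable and maximal with that property. -/
def MaximalSelfStable {X : Type*} [MetricSpace X] (r : ℕ → ℝ) (F : Set (ℕ → X)) : Prop :=
  SelfStable r F ∧ ∀ G, SelfStable r G → F ⊆ G → G = F

/-- A sequence lies in the subspace `Y`. -/
def InSubspace {X : Type*} (Y : Set X) (x : ℕ → X) : Prop := ∀ n, x n ∈ Y

/-- A family of sequences in the subspace `Y` that is self-stable and maximal among
self-stable families of sequences in `Y`. -/
def MaximalSelfStableIn {X : Type*} [MetricSpace X] (Y : Set X) (r : ℕ → ℝ)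
    (F : Set (ℕ → X)) : Prop :=
  (∀ x ∈ F, InSubspace Y x) ∧ SelfStable r F ∧
    ∀ G, (∀ x ∈ G, InSubspace Y x) → SelfStable r G → F ⊆ G → G = F

/-- `[F]_Y`: all sequences in `Y` at normalized distance 0 from some member of `F`. -/
def bracket {X : Type*} [MetricSpace X] (Y : Set X) (r : ℕ → ℝ) (F : Set (ℕ → X)) :
    Set (ℕ → X) :=
  {y | InSubspace Y y ∧ ∃ x ∈ F, Tendsto (fun n => dist (x n) (y n) / r n) atTop (nhds 0)}

/-- `Y` and `Z` are tangent equivalent at `a` w.r.t. `r`. -/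
def TangentEquiv {X : Type*} [MetricSpace X] (Y Z : Set X) (a : X) (r : ℕ → ℝ) : Prop :=
  (∀ y : ℕ → X, InSubspace Y y → MutuallyStable r y (fun _ => a) →
    ∃ z : ℕ → X, InSubspace Z z ∧
      Tendsto (fun n => dist (y n) (z n) / r n) atTop (nhds 0)) ∧
  (∀ z : ℕ → X, InSubspace Z z → MutuallyStable r z (fun _ => a) →
    ∃ y : ℕ → X, InSubspace Y y ∧
      Tendsto (fun n => dist (z n) (y n) / r n) atTop (nhds 0))

/-- `Y` and `Z` are strongly tangent equivalent at `a`. -/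
def StronglyTangentEquiv {X : Type*} [MetricSpace X] (Y Z : Set X) (a : X) : Prop :=
  ∀ r : ℕ → ℝ, Normalizing r → TangentEquiv Y Z a r

/-- `ε_a(t, Z, Y) = sup_{z ∈ S^Z(a,t)} inf_{y ∈ Y} dist z y`
(here the first set argument is `Y`, the second is `Z`). -/
noncomputable def epsZY {X : Type*} [MetricSpace X] (Y Z : Set X) (a : X) (t : ℝ) : ℝ :=
  sSup ((fun z => sInf ((fun y => dist z y) '' Y)) '' {z ∈ Z | dist a z = t})

/-! Every sequence of a self-stable family in `Ỹ` through `ã` is stable with `ã`, so tangent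
equivalence moves it to a sequence of `Z̃` stable with `ã` at normalized distance `0`. By Zorn's
lemma that sequence lies in some maximal self-stable family through `ã`, which by uniqueness is
`Z̃_{a,r̃}`. Hence every self-stable family in `Ỹ` through `ã` is contained in `[Z̃_{a,r̃}]_Y`,
while the bracket is itself self-stable because normalized limits are unchanged by perturbations at
normalized distance `0`; this gives both its maximality and its uniqueness. -/

section

variable {X : Type*} [MetricSpace X] {r : ℕ → ℝ}

theorem tendsto_dist_div_of_tendsto_zero {x x' y y' : ℕ → X} {L : ℝ}
    (hxy : Tendsto (fun n => dist (x n) (y n) / r n) atTop (𝓝 0))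
    (hx'y' : Tendsto (fun n => dist (x' n) (y' n) / r n) atTop (𝓝 0))
    (hxx' : Tendsto (fun n => dist (x n) (x' n) / r n) atTop (𝓝 L)) :
    Tendsto (fun n => dist (y n) (y' n) / r n) atTop (𝓝 L) := by
  have hbound : ∀ n, ‖dist (y n) (y' n) / r n - dist (x n) (x' n) / r n‖ ≤
      |dist (x n) (y n) / r n| + |dist (x' n) (y' n) / r n| := fun n => by
    rw [Real.norm_eq_abs, ← sub_div, abs_div, abs_div, abs_div, abs_of_nonneg dist_nonneg,
      abs_of_nonneg dist_nonneg, ← add_div]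
    gcongr
    simpa only [Real.dist_eq, dist_comm (y n) (x n), dist_comm (y' n) (x' n)] using
      dist_dist_dist_le (y n) (y' n) (x n) (x' n)
  have hdiff := squeeze_zero_norm hbound (by simpa using hxy.abs.add hx'y'.abs)
  simpa using hdiff.add hxx'

theorem MutuallyStable.symm {x y : ℕ → X} (h : MutuallyStable r x y) : MutuallyStable r y x := by
  obtain ⟨L, hL⟩ := h
  exact ⟨L, by simpa only [dist_comm] using hL⟩

theorem MutuallyStable.refl (x : ℕ → X) : MutuallyStable r x x :=
  ⟨0, by simp⟩

theorem MutuallyStable.of_tendsto_zero {x x' y y' : ℕ → X} (h : MutuallyStable r x x')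
    (hxy : Tendsto (fun n => dist (x n) (y n) / r n) atTop (𝓝 0))
    (hx'y' : Tendsto (fun n => dist (x' n) (y' n) / r n) atTop (𝓝 0)) :
    MutuallyStable r y y' :=
  let ⟨L, hL⟩ := h
  ⟨L, tendsto_dist_div_of_tendsto_zero hxy hx'y' hL⟩

theorem selfStable_pair {x y : ℕ → X} (h : MutuallyStable r x y) : SelfStable r {x, y} := by
  rintro u (rfl | rfl) v (rfl | rfl)
  exacts [.refl _, h, h.symm, .refl _]

theorem exists_maximalSelfStableIn_superset (Z : Set X) {G : Set (ℕ → X)}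
    (hGZ : ∀ x ∈ G, InSubspace Z x) (hG : SelfStable r G) :
    ∃ M, G ⊆ M ∧ MaximalSelfStableIn Z r M := by
  let S : Set (Set (ℕ → X)) := {G | (∀ x ∈ G, InSubspace Z x) ∧ SelfStable r G}
  have hchain : ∀ c ⊆ S, IsChain (· ⊆ ·) c → c.Nonempty → ∃ ub ∈ S, ∀ s ∈ c, s ⊆ ub := by
    intro c hcS hc _
    refine ⟨⋃₀ c, ⟨?_, ?_⟩, fun s hs => Set.subset_sUnion_of_mem hs⟩
    · rintro x ⟨s, hs, hxs⟩
      exact (hcS hs).1 x hxs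
    · rintro x ⟨s, hs, hxs⟩ y ⟨t, ht, hyt⟩
      rcases hc.total hs ht with hst | hts
      · exact (hcS ht).2 x (hst hxs) y hyt
      · exact (hcS hs).2 x hxs y (hts hyt)
  obtain ⟨M, hGM, hM⟩ := zorn_subset_nonempty S hchain G ⟨hGZ, hG⟩
  exact ⟨M, hGM, hM.1.1, hM.1.2, fun G' hG'Z hG' hMG' => (hM.2 ⟨hG'Z, hG'⟩ hMG').antisymm hMG'⟩

theorem exists_maximalSelfStableIn_mem_pair {Z : Set X} {a : X} (haZ : a ∈ Z)
    {z : ℕ → X} (hzZ : InSubspace Z z) (hz : MutuallyStable r z (fun _ => a)) :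
    ∃ M, MaximalSelfStableIn Z r M ∧ z ∈ M ∧ (fun _ => a) ∈ M := by
  have hpairZ : ∀ x ∈ ({z, fun _ => a} : Set (ℕ → X)), InSubspace Z x := by
    rintro x (rfl | rfl)
    exacts [hzZ, fun _ => haZ]
  obtain ⟨M, hpairM, hM⟩ := exists_maximalSelfStableIn_superset Z hpairZ (selfStable_pair hz)
  exact ⟨M, hM, hpairM (.inl rfl), hpairM (.inr rfl)⟩

theorem selfStable_bracket (Y : Set X) {F : Set (ℕ → X)} (hF : SelfStable r F) :
    SelfStable r (bracket Y r F) := by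
  rintro y ⟨-, x, hxF, hxy⟩ y' ⟨-, x', hx'F, hx'y'⟩
  exact (hF x hxF x' hx'F).of_tendsto_zero hxy hx'y'

theorem subset_bracket_of_tangentEquiv {Y Z : Set X} {a : X} {F G : Set (ℕ → X)}
    (hYZ : TangentEquiv Y Z a r)
    (hF : ∀ z, InSubspace Z z → MutuallyStable r z (fun _ => a) → z ∈ F)
    (hGY : ∀ x ∈ G, InSubspace Y x) (hG : SelfStable r G) (haG : (fun _ => a) ∈ G) :
    G ⊆ bracket Y r F := by
  intro g hg
  have hga : MutuallyStable r g (fun _ => a) := hG g hg _ haG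
  obtain ⟨z, hzZ, hgz⟩ := hYZ.1 g (hGY g hg) hga
  have hza : MutuallyStable r z (fun _ => a) := hga.of_tendsto_zero hgz (by simp)
  exact ⟨hGY g hg, z, hF z hzZ hza, by simpa only [dist_comm] using hgz⟩

end

theorem stmt_16_general {X : Type*} [MetricSpace X] (Y Z : Set X) (a : X)
    (haY : a ∈ Y) (haZ : a ∈ Z) (r : ℕ → ℝ)
    (hYZ : TangentEquiv Y Z a r)
    (F : Set (ℕ → X))
    (huniq : ∀ G : Set (ℕ → X), MaximalSelfStableIn Z r G → (fun _ => a) ∈ G → G = F) :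
    MaximalSelfStableIn Y r (bracket Y r F) ∧ (fun _ => a) ∈ bracket Y r F ∧
      ∀ G : Set (ℕ → X), MaximalSelfStableIn Y r G → (fun _ => a) ∈ G →
        G = bracket Y r F := by
  have hFz : ∀ z, InSubspace Z z → MutuallyStable r z (fun _ => a) →
      MaximalSelfStableIn Z r F ∧ z ∈ F := fun z hzZ hz => by
    obtain ⟨M, hM, hzM, haM⟩ := exists_maximalSelfStableIn_mem_pair haZ hzZ hz
    exact huniq M hM haM ▸ ⟨hM, hzM⟩
  obtain ⟨hF, haF⟩ := hFz _ (fun _ => haZ) (.refl _)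
  have hsub : ∀ G, (∀ x ∈ G, InSubspace Y x) → SelfStable r G → (fun _ => a) ∈ G →
      G ⊆ bracket Y r F := fun G =>
    subset_bracket_of_tangentEquiv hYZ fun z hzZ hz => (hFz z hzZ hz).2
  have haBr : (fun _ => a) ∈ bracket Y r F := ⟨fun _ => haY, _, haF, by simp⟩
  have hBr : MaximalSelfStableIn Y r (bracket Y r F) :=
    ⟨fun _ hx => hx.1, selfStable_bracket Y hF.2.1,
      fun G hGY hG hBrG => (hsub G hGY hG (hBrG haBr)).antisymm hBrG⟩
  exact ⟨hBr, haBr, fun G hG haG => (hG.2.2 _ hBr.1 hBr.2.1 (hsub G hG.1 hG.2.1 haG)).symm⟩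

/-- If there is a unique maximal self-stable family in `Z̃` containing `ã`, then
`[Z̃_{a,r̃}]_Y` is the unique maximal self-stable family in `Ỹ` containing `ã`. -/
theorem stmt_16 {X : Type*} [MetricSpace X] (Y Z : Set X) (a : X)
    (haY : a ∈ Y) (haZ : a ∈ Z) (r : ℕ → ℝ) (hr : Normalizing r)
    (hYZ : TangentEquiv Y Z a r)
    (F : Set (ℕ → X)) (hF : MaximalSelfStableIn Z r F) (haF : (fun _ => a) ∈ F)
    (huniq : ∀ G : Set (ℕ → X), MaximalSelfStableIn Z r G → (fun _ => a) ∈ G → G = F) :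
    MaximalSelfStableIn Y r (bracket Y r F) ∧ (fun _ => a) ∈ bracket Y r F ∧
      ∀ G : Set (ℕ → X), MaximalSelfStableIn Y r G → (fun _ => a) ∈ G →
        G = bracket Y r F :=
  stmt_16_general Y Z a haY haZ r hYZ F huniq
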